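/- Let E be a complex Banach space, let T be a continuous linear operator on E, and let p be a polynomial with complex coefficients such that p(T) is a compact operator. Then every accumulation point z of the spectrum of T satisfies p(z) = 0. -/

import Mathlib

/-!
If `p` is nonconstant, `p` is finite-to-one, so it carries an accumulation point `z` of `σ(T)` to an
accumulation point `p(z)` of `p(σ(T)) ⊆ σ(p(T))`. By the Fredholm alternative the nonzero spectrum
of the compact operator `p(T)` consists of eigenvalues, and a Riesz-lemma argument along the flag
spanned by eigenvectors shows that only finitely many eigenvalues have modulus `≥ r > 0`; hence
`p(z) = 0`. If `p = c ≠ 0` is constant, the identity is compact, `E` is finite-dimensional and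
`σ(T)` is finite.
-/

open Filter Topology Metric Set Module End Polynomial

theorem AccPt.image_of_finite_preimage_singleton {X Y : Type*} [TopologicalSpace X] [T1Space X]
    [TopologicalSpace Y] {f : X → Y} {x : X} {s : Set X} (h : AccPt x (𝓟 s))
    (hf : ContinuousAt f x) (hfin : (f ⁻¹' {f x}).Finite) : AccPt (f x) (𝓟 (f '' s)) := by
  rw [accPt_iff_frequently_nhdsNE] at h ⊢
  have hne : ∀ᶠ y in 𝓝[≠] x, f y ∈ ({f x}ᶜ : Set Y) := by
    have := mem_codiscrete.1 hfin.compl_mem_codiscrete x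
    rwa [compl_compl, disjoint_principal_right] at this
  exact (tendsto_nhdsWithin_of_tendsto_nhds_of_eventually_within _
    (hf.mono_left nhdsWithin_le_nhds) hne).frequently (h.mono fun y => mem_image_of_mem f)

theorem Polynomial.finite_preimage_eval_singleton {R : Type*} [CommRing R] [IsDomain R]
    {p : R[X]} (hp : 0 < p.degree) (c : R) : ((fun x => p.eval x) ⁻¹' {c}).Finite := by
  have hne : p - C c ≠ 0 := fun h => by
    rw [← degree_sub_C hp (a := c), h, degree_zero] at hp
    exact not_lt_bot hp
  exact (finite_setOfPred_isRoot hne).subset fun x hx => by simp_all [sub_eq_zero]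

theorem Module.End.smul_sub_apply_mem_span_image_Iio {R M : Type*} [CommRing R] [AddCommGroup M]
    [Module R M] {f : End R M} {l : ℕ → R} {e : ℕ → M} (he : ∀ i, f (e i) = l i • e i) (n : ℕ)
    {x : M} (hx : x ∈ Submodule.span R (e '' Iio (n + 1))) :
    l n • x - f x ∈ Submodule.span R (e '' Iio n) := by
  have : Submodule.span R (e '' Iio (n + 1)) ≤
      (Submodule.span R (e '' Iio n)).comap (l n • 1 - f) := by
    rw [Submodule.span_le]
    rintro - ⟨i, hi, rfl⟩
    have hfe : (l n • 1 - f) (e i) = (l n - l i) • e i := by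
      simp [he, sub_smul]
    rw [SetLike.mem_coe, Submodule.mem_comap, hfe]
    rcases Nat.lt_succ_iff_lt_or_eq.1 hi with hi | rfl
    · exact Submodule.smul_mem _ _ (Submodule.subset_span (mem_image_of_mem e hi))
    · simp
  simpa using this hx

section NormedSpace

variable {𝕜 X : Type*} [NontriviallyNormedField 𝕜] [NormedAddCommGroup X] [NormedSpace 𝕜 X]

theorem exists_mem_norm_le_forall_one_le_norm_sub {F G : Submodule 𝕜 X}
    (hF : IsClosed (F : Set X)) (hFG : F < G) {c : 𝕜} (hc : 1 < ‖c‖) {R : ℝ} (hR : ‖c‖ < R) :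
    ∃ y ∈ G, ‖y‖ ≤ R ∧ ∀ u ∈ F, 1 ≤ ‖y - u‖ := by
  obtain ⟨x, hxG, hxF⟩ := SetLike.exists_of_lt hFG
  obtain ⟨y, hyR, hy⟩ := riesz_lemma_of_norm_lt hc hR (F := F.comap G.subtype)
    (hF.preimage continuous_subtype_val) ⟨⟨x, hxG⟩, hxF⟩
  exact ⟨y, y.2, hyR, fun u hu => hy ⟨u, hFG.le hu⟩ hu⟩

theorem ContinuousLinearMap.finite_spectrum [CompleteSpace X] [FiniteDimensional 𝕜 X]
    (T : X →L[𝕜] X) : (spectrum 𝕜 T).Finite := by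
  rw [ContinuousLinearMap.spectrum_eq]
  exact Module.End.finite_spectrum _

namespace IsCompactOperator

theorem not_forall_lt_le_dist {Y : Type*} [NormedAddCommGroup Y] [NormedSpace 𝕜 Y]
    {K : X →L[𝕜] Y} (hK : IsCompactOperator K) {x : ℕ → X} {R : ℝ} (hx : ∀ n, ‖x n‖ ≤ R)
    {ε : ℝ} (hε : 0 < ε) : ¬ ∀ ⦃m n⦄, m < n → ε ≤ dist (K (x m)) (K (x n)) := by
  intro hsep
  have hpair : Pairwise fun m n => ε ≤ dist (K (x m)) (K (x n)) := fun m n hmn =>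
    hmn.lt_or_gt.elim (hsep ·) fun h => (hsep h).trans_eq (dist_comm _ _)
  obtain ⟨C, hC, hKC⟩ := hK.image_closedBall_subset_compact R
  have hpre : (fun n => K (x n)) ⁻¹' C = univ :=
    eq_univ_of_forall fun n => hKC ⟨x n, mem_closedBall_zero_iff.2 (hx n), rfl⟩
  have hcpt := (isClosedEmbedding_of_pairwise_le_dist hε hpair).isCompact_preimage hC
  rw [hpre] at hcpt
  exact infinite_univ hcpt.finite_of_discrete

theorem finite_setOf_le_norm_hasEigenvalue [CompleteSpace 𝕜] {K : X →L[𝕜] X}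
    (hK : IsCompactOperator K) {r : ℝ} (hr : 0 < r) :
    {μ : 𝕜 | r ≤ ‖μ‖ ∧ HasEigenvalue (K : End 𝕜 X) μ}.Finite := by
  by_contra hinf
  set l : ℕ → 𝕜 := fun n => Set.Infinite.natEmbedding _ hinf n
  have hl_inj : Function.Injective l :=
    Subtype.val_injective.comp (Set.Infinite.natEmbedding _ hinf).injective
  have hl (n : ℕ) : r ≤ ‖l n‖ ∧ HasEigenvalue (K : End 𝕜 X) (l n) :=
    (Set.Infinite.natEmbedding _ hinf n).2
  choose e he using fun n => (hl n).2.exists_hasEigenvector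
  have hKe (n : ℕ) : K (e n) = l n • e n := (he n).apply_eq_smul
  set F : ℕ → Submodule 𝕜 X := fun n => Submodule.span 𝕜 (e '' Iio n)
  have hF_closed (n : ℕ) : IsClosed (F n : Set X) :=
    haveI := FiniteDimensional.span_of_finite 𝕜 ((finite_Iio n).image e)
    Submodule.closed_of_finiteDimensional (F n)
  have hF_mono : Monotone F := fun m n hmn =>
    Submodule.span_mono (image_mono (Iio_subset_Iio hmn))
  have hF_lt (n : ℕ) : F n < F (n + 1) := by
    refine lt_of_le_of_ne (hF_mono n.le_succ) fun h => ?_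
    have hli := eigenvectors_linearIndependent' (K : End 𝕜 X) l hl_inj e he
    refine hli.notMem_span_image (s := Iio n) (lt_irrefl n) ?_
    change e n ∈ F n
    rw [h]
    exact Submodule.subset_span (mem_image_of_mem e (Nat.lt_succ_self n))
  obtain ⟨c, hc⟩ := NormedField.exists_one_lt_norm 𝕜
  choose y hyF hy_norm hy_far using fun n =>
    exists_mem_norm_le_forall_one_le_norm_sub (hF_closed n) (hF_lt n) hc (lt_add_one ‖c‖)
  refine hK.not_forall_lt_le_dist hy_norm hr fun m n hmn => ?_
  have hl_ne : l n ≠ 0 := norm_pos_iff.1 (hr.trans_le (hl n).1)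
  have hKym : K (y m) ∈ F n := by
    have := Submodule.sub_mem _ (Submodule.smul_mem _ (l m) (hyF m))
      (hF_mono m.le_succ (smul_sub_apply_mem_span_image_Iio hKe m (hyF m)))
    exact hF_mono hmn (by simpa using this)
  set w := (l n)⁻¹ • (l n • y n - K (y n) + K (y m))
  have hw : w ∈ F n := Submodule.smul_mem _ _
    (Submodule.add_mem _ (smul_sub_apply_mem_span_image_Iio hKe n (hyF n)) hKym)
  have hKy : K (y n) - K (y m) = l n • (y n - w) := by
    simp only [w, smul_sub, smul_inv_smul₀ hl_ne]
    abel
  calc r = r * 1 := (mul_one r).symm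
    _ ≤ ‖l n‖ * ‖y n - w‖ := mul_le_mul (hl n).1 (hy_far n w hw) zero_le_one (norm_nonneg _)
    _ = dist (K (y m)) (K (y n)) := by rw [dist_comm, dist_eq_norm, hKy, norm_smul]

theorem not_accPt_spectrum [CompleteSpace 𝕜] [CompleteSpace X] {K : X →L[𝕜] X}
    (hK : IsCompactOperator K) {w : 𝕜} (hw : w ≠ 0) : ¬ AccPt w (𝓟 (spectrum 𝕜 K)) := fun h => by
  have hr : 0 < ‖w‖ / 2 := by positivity
  refine Set.Infinite.of_accPt (h.nhds_inter (ball_mem_nhds w hr))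
    ((hK.finite_setOf_le_norm_hasEigenvalue hr).subset ?_)
  rintro μ ⟨hμw, hμ⟩
  have hμ_norm : ‖w‖ / 2 ≤ ‖μ‖ := by
    have := norm_le_norm_add_norm_sub' w μ
    rw [mem_ball, dist_eq_norm, norm_sub_rev] at hμw
    linarith
  exact ⟨hμ_norm, (hK.hasEigenvalue_iff_mem_spectrum (norm_pos_iff.1 (hr.trans_le hμ_norm))).2 hμ⟩

end IsCompactOperator

end NormedSpace

theorem stmt3 {E : Type*} [NormedAddCommGroup E] [NormedSpace ℂ E] [CompleteSpace E]
    (T : E →L[ℂ] E) (p : Polynomial ℂ)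
    (hcpt : IsCompactOperator (Polynomial.aeval T p : E →L[ℂ] E))
    (z : ℂ) (hz : AccPt z (𝓟 (spectrum ℂ T))) :
    p.eval z = 0 := by
  by_contra hpz
  rcases lt_or_ge 0 p.degree with hdeg | hdeg
  · have hacc : AccPt (p.eval z) (𝓟 (spectrum ℂ (aeval T p))) :=
      (hz.image_of_finite_preimage_singleton p.continuous.continuousAt
        (finite_preimage_eval_singleton hdeg _)).mono
        (principal_mono.2 (spectrum.subset_polynomial_aeval T p))
    exact hcpt.not_accPt_spectrum hpz hacc
  · obtain ⟨c, rfl⟩ : ∃ c, p = C c := ⟨_, eq_C_of_degree_le_zero hdeg⟩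
    rw [eval_C] at hpz
    rw [aeval_C] at hcpt
    have : FiniteDimensional ℂ E := by
      refine FiniteDimensional.of_isCompactOperator_id ((IsCompactOperator.smul_iff₀ hpz).1 ?_)
      simpa [Algebra.algebraMap_eq_smul_one] using hcpt
    exact Set.Infinite.of_accPt hz T.finite_spectrum
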